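/- Under the blanket assumptions, let x̄ ∈ dom(∂F) and suppose g* satisfies the calmness condition on dom(g*). If Q satisfies the KL property with exponent θ ∈ [0,1) at (x̄, ȳ) for every ȳ ∈ ∂g(x̄), then F satisfies the KL property with the same exponent θ at x̄. -/

import Mathlib

open Filter Topology Set
open scoped RealInnerProductSpace Pointwise NNReal

noncomputable section

namespace Paper

variable {E : Type*} [NormedAddCommGroup E] [InnerProductSpace ℝ E]

/-- The effective domain of an extended-real-valued function. -/
def edom (φ : E → EReal) : Set E := {x | φ x ≠ ⊤}

/-- A function with values in `(-∞, +∞]` is proper if it is not identically `+∞`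
and never takes the value `-∞`. -/
def Proper (φ : E → EReal) : Prop := (∃ x, φ x ≠ ⊤) ∧ ∀ x, φ x ≠ ⊥

/-- The Fréchet subdifferential of `φ` at `x`. -/
def frSubdiff (φ : E → EReal) (x : E) : Set E :=
  {y | φ x ≠ ⊤ ∧ 0 ≤ Filter.liminf
      (fun z : E => (φ z - φ x - ((⟪y, z - x⟫ : ℝ) : EReal)) * ((‖z - x‖⁻¹ : ℝ) : EReal))
      (𝓝[≠] x)}

/-- The limiting (Mordukhovich) subdifferential of `φ` at `x`. -/
def limSubdiff (φ : E → EReal) (x : E) : Set E :=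
  {y | ∃ u v : ℕ → E,
      Tendsto u atTop (𝓝 x) ∧ Tendsto (fun k => φ (u k)) atTop (𝓝 (φ x)) ∧
      (∀ k, v k ∈ frSubdiff φ (u k)) ∧ Tendsto v atTop (𝓝 y)}

/-- The convex subdifferential of a real-valued function. -/
def cvxSubdiff (g : E → ℝ) (x : E) : Set E :=
  {y | ∀ z, g x + ⟪y, z - x⟫ ≤ g z}

/-- The convex subdifferential of an extended-real-valued function. -/
def cvxSubdiffE (φ : E → EReal) (x : E) : Set E :=
  {y | ∀ z, φ x + ((⟪y, z - x⟫ : ℝ) : EReal) ≤ φ z}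

/-- The Fenchel conjugate of an extended-real-valued function. -/
def fconjE (φ : E → EReal) : E → EReal :=
  fun y => ⨆ x : E, (((⟪x, y⟫ : ℝ) : EReal) - φ x)

/-- The Fenchel conjugate of a real-valued function. -/
def fconj (g : E → ℝ) : E → EReal := fconjE (fun x => ((g x : ℝ) : EReal))

/-- `φ` satisfies the calmness condition at `x` relative to `A`. -/
def CalmAt (φ : E → EReal) (x : E) (A : Set E) : Prop :=
  ∃ κ : ℝ, 0 < κ ∧ ∃ B ∈ 𝓝 x, ∀ u ∈ B ∩ A,
    φ u ≤ φ x + ((κ * ‖u - x‖ : ℝ) : EReal) ∧ φ x ≤ φ u + ((κ * ‖u - x‖ : ℝ) : EReal)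

/-- `φ` satisfies the calmness condition on `A`. -/
def CalmOn (φ : E → EReal) (A : Set E) : Prop := ∀ x ∈ A, CalmAt φ x A

/-- The Kurdyka–Łojasiewicz property of `φ` at `x`. -/
def KLAt (φ : E → EReal) (x : E) : Prop :=
  ∃ ε > (0 : ℝ), ∃ δ > (0 : ℝ), ∃ ϕ ϕ' : ℝ → ℝ,
    ϕ 0 = 0 ∧ ContinuousOn ϕ (Set.Ico 0 ε) ∧ ConcaveOn ℝ (Set.Ico 0 ε) ϕ ∧
    (∀ s ∈ Set.Ioo (0 : ℝ) ε, HasDerivAt ϕ (ϕ' s) s) ∧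
    ContinuousOn ϕ' (Set.Ioo 0 ε) ∧ (∀ s ∈ Set.Ioo (0 : ℝ) ε, 0 < ϕ' s) ∧
    ∀ z ∈ Metric.ball x δ, φ x < φ z → φ z < φ x + (ε : EReal) →
      1 ≤ ENNReal.ofReal (ϕ' ((φ z).toReal - (φ x).toReal)) *
        EMetric.infEdist (0 : E) (limSubdiff φ z)

/-- The KL property of `φ` at `x` with exponent `θ`. -/
def KLExpAt (φ : E → EReal) (x : E) (θ : ℝ) : Prop :=
  ∃ c > (0 : ℝ), ∃ ε > (0 : ℝ), ∃ δ > (0 : ℝ),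
    ∀ z ∈ Metric.ball x δ, φ x < φ z → φ z < φ x + (ε : EReal) →
      ENNReal.ofReal (c * ((φ z).toReal - (φ x).toReal) ^ θ) ≤
        EMetric.infEdist (0 : E) (limSubdiff φ z)

/-- The (possibly multivalued) proximity operator of `φ`. -/
def proxSet (φ : E → EReal) (u : E) : Set E :=
  {z | ∀ w, φ z + ((‖z - u‖ ^ 2 / 2 : ℝ) : EReal) ≤ φ w + ((‖w - u‖ ^ 2 / 2 : ℝ) : EReal)}

/-- A positive scaling of an extended-real-valued function. -/
def scaleE (α : ℝ) (φ : E → EReal) : E → EReal := fun x => ((α : ℝ) : EReal) * φ x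

/-- `h` is locally Lipschitz differentiable on `s`. -/
def LocLipGradOn [CompleteSpace E] (h : E → ℝ) (s : Set E) : Prop :=
  (∀ x ∈ s, DifferentiableAt ℝ h x) ∧
  ∀ x ∈ s, ∃ U ∈ 𝓝 x, ∃ L : ℝ, ∀ u ∈ U ∩ s, ∀ v ∈ U ∩ s,
    ‖gradient h u - gradient h v‖ ≤ L * ‖u - v‖

/-- The numerator `ζ = f + h`. -/
def zeta (f : E → EReal) (h : E → ℝ) (x : E) : EReal := f x + ((h x : ℝ) : EReal)

/-- `η(x,y) = ⟨x,y⟩ − g^*(y)`. -/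
def eta (g : E → ℝ) (x y : E) : EReal := ((⟪x, y⟫ : ℝ) : EReal) - fconj g y

/-- The extended objective of the fractional problem. -/
def Ffun (f : E → EReal) (g h : E → ℝ) (x : E) : EReal :=
  if g x ≠ 0 ∧ f x ≠ ⊤ then ((((f x).toReal + h x) / g x : ℝ) : EReal) else ⊤

/-- The extended objective of the reformulated problem. -/
def Qfun (f : E → EReal) (g h : E → ℝ) (x y : E) : EReal :=
  if f x ≠ ⊤ ∧ 0 < eta g x y then
    ((((f x).toReal + h x) / (eta g x y).toReal : ℝ) : EReal) else ⊤

/-- Pack a pair into the `ℓ²` product space. -/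
def mk2 (x y : E) : WithLp 2 (E × E) := (WithLp.equiv 2 (E × E)).symm (x, y)

def pr1 (p : WithLp 2 (E × E)) : E := (WithLp.equiv 2 (E × E) p).1

def pr2 (p : WithLp 2 (E × E)) : E := (WithLp.equiv 2 (E × E) p).2

/-- `Q` as a function on the `ℓ²` product space. -/
def Qpair (f : E → EReal) (g h : E → ℝ) (p : WithLp 2 (E × E)) : EReal :=
  Qfun f g h (pr1 p) (pr2 p)

/-- The blanket assumptions of the paper. -/
structure Blanket [CompleteSpace E] (f : E → EReal) (g h : E → ℝ) : Prop where
  f_proper : Proper f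
  f_lsc : LowerSemicontinuous f
  f_cont : ContinuousOn f (edom f)
  f_bddBelow : ∃ m : ℝ, ∀ x, (m : EReal) ≤ f x
  h_lsc : LowerSemicontinuous h
  h_diff : LocLipGradOn h {x | g x ≠ 0}
  g_convex : ConvexOn ℝ Set.univ g
  g_nonneg : ∀ x, 0 ≤ g x
  omega_nonempty : ∃ x, g x ≠ 0
  zeta_nonneg : ∀ x, f x ≠ ⊤ → 0 ≤ zeta f h x

/-- `x` is a critical point of `F`: `0 ∈ ∂̂f(x) + ∇h(x) − F(x)·∂g(x)`. -/
def IsCritF [CompleteSpace E] (f : E → EReal) (g h : E → ℝ) (x : E) : Prop :=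
  g x ≠ 0 ∧ f x ≠ ⊤ ∧
  ∃ u ∈ frSubdiff f x, ∃ v ∈ cvxSubdiff g x,
    u + gradient h x - (Ffun f g h x).toReal • v = 0

/-- The level set `X = {x : F(x) ≤ F(x⁰)}`. -/
def lvlSet (f : E → EReal) (g h : E → ℝ) (x0 : E) : Set E :=
  {x | Ffun f g h x ≤ Ffun f g h x0}

/-- The enlargement `X_{α̲}` of the level set. -/
def Xal (f : E → EReal) (g h : E → ℝ) (x0 : E) (αl : ℝ) : Set E :=
  {z | (Metric.infDist z (lvlSet f g h x0)) ^ 2 ≤ sSup (g '' lvlSet f g h x0) / αl}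

/-- The compact set `𝒴 = ∪_{z ∈ X_{α̲}} ∂g(z)`. -/
def Yset (f : E → EReal) (g h : E → ℝ) (x0 : E) (αl : ℝ) : Set E :=
  ⋃ z ∈ Xal f g h x0 αl, cvxSubdiff g z

/-- The set `S = {(x,y) ∈ X × 𝒴 : η(x,y) > 0}`. -/
def Sset (f : E → EReal) (g h : E → ℝ) (x0 : E) (αl : ℝ) : Set (E × E) :=
  {p | p.1 ∈ lvlSet f g h x0 ∧ p.2 ∈ Yset f g h x0 αl ∧ 0 < eta g p.1 p.2}

/-- The set of accumulation points of a sequence. -/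
def accSet {X : Type*} [TopologicalSpace X] (pt : ℕ → X) : Set X :=
  {p | ∃ σ : ℕ → ℕ, StrictMono σ ∧ Tendsto (pt ∘ σ) atTop (𝓝 p)}

/-- A polyhedral function: its epigraph is a finite intersection of closed half-spaces. -/
def IsPolyhedralFn (φ : E → EReal) : Prop :=
  ∃ (m : ℕ) (w : Fin m → E) (c b : Fin m → ℝ),
    ∀ (x : E) (a : ℝ), (φ x ≤ (a : EReal) ↔ ∀ i, ⟪w i, x⟫ + c i * a ≤ b i)

/-!
On the graph of `∂g` the two objectives agree: `Q(x, y) = F(x)` when `y ∈ ∂g(x)`, because then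
`η(x, y) = g(x)`; and `Q(x, y) ≥ F(x)` everywhere, because `η(x, y) ≤ g(x)` by Fenchel–Young.
Hence a Fréchet subgradient `w` of `F` at `u` gives the Fréchet subgradient `(w, 0)` of `Q` at
`(u, y)` for every `y ∈ ∂g(u)`. Subgradients of the convex function `g` are locally bounded and
`∂g` has closed graph, so along a subsequence this passes to the limit: every `w ∈ ∂F(z)` gives
`(w, 0) ∈ ∂Q(z, ŷ)` for some `ŷ ∈ ∂g(z)`. Since `∂g(x̄)` is compact and `Q ≡ F(x̄)` on
`{x̄} × ∂g(x̄)`, the KL inequalities of `Q` there hold with common constants on a neighbourhood of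
that set, and by outer semicontinuity of `∂g` the point `(z, ŷ)` lies in it when `z` is close to
`x̄`. As `‖(w, 0)‖ = ‖w‖`, this is the KL inequality for `F` at `x̄`.
-/

theorem _root_.EReal.coe_le_sub_sub_mul_inv_iff {a : EReal} {r s b t : ℝ} (ht : 0 < t) :
    (b : EReal) ≤ (a - r - s) * ((t⁻¹ : ℝ) : EReal) ↔ ((r + s + b * t : ℝ) : EReal) ≤ a := by
  induction a using EReal.rec with
  | bot =>
    exact iff_of_false (by simp [EReal.bot_mul_coe_of_pos (inv_pos.2 ht)])
      (not_le.2 (EReal.bot_lt_coe _))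
  | coe a =>
    rw [← EReal.coe_sub, ← EReal.coe_sub, ← EReal.coe_mul, EReal.coe_le_coe_iff,
      EReal.coe_le_coe_iff, ← div_eq_mul_inv, le_div_iff₀ ht]
    constructor <;> intro h <;> linarith
  | top => simp [EReal.top_mul_coe_of_pos (inv_pos.2 ht)]

theorem mem_frSubdiff_iff {φ : E → EReal} {x y : E} {r : ℝ} (hx : φ x = r) :
    y ∈ frSubdiff φ x ↔
      ∀ b < (0 : ℝ), ∀ᶠ z in 𝓝 x, ((r + ⟪y, z - x⟫ + b * ‖z - x‖ : ℝ) : EReal) ≤ φ z := by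
  have hpos : ∀ {z}, z ≠ x → 0 < ‖z - x‖ := fun hz => norm_pos_iff.2 (sub_ne_zero.2 hz)
  constructor
  · rintro ⟨-, hlim⟩ b hb
    have hev := eventually_nhdsWithin_iff.1 <|
      eventually_lt_of_lt_liminf ((EReal.coe_lt_coe_iff.2 hb).trans_le hlim)
    filter_upwards [hev] with z hz
    rcases eq_or_ne z x with rfl | hzx
    · simp [hx]
    · rw [hx] at hz
      exact (EReal.coe_le_sub_sub_mul_inv_iff (hpos hzx)).1 (hz hzx).le
  · intro h
    refine ⟨by simp [hx], EReal.ge_of_forall_gt_iff_ge.1 fun b hb => ?_⟩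
    refine le_liminf_of_le (by isBoundedDefault) ?_
    filter_upwards [eventually_nhdsWithin_of_eventually_nhds (h b (EReal.coe_lt_coe_iff.1 hb)),
      self_mem_nhdsWithin] with z hz hzx
    rw [hx]
    exact (EReal.coe_le_sub_sub_mul_inv_iff (hpos hzx)).2 hz

section Conjugate

variable (g : E → ℝ)

theorem inner_sub_le_fconj (x y : E) :
    ((⟪x, y⟫ - g x : ℝ) : EReal) ≤ fconj g y :=
  le_iSup_of_le x (EReal.coe_sub _ _).le

theorem eta_le (x y : E) : eta g x y ≤ g x := by
  calc eta g x y ≤ ((⟪x, y⟫ : ℝ) : EReal) - ((⟪x, y⟫ - g x : ℝ) : EReal) :=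
        EReal.sub_le_sub le_rfl (inner_sub_le_fconj g x y)
    _ = g x := by rw [← EReal.coe_sub, sub_sub_cancel]

variable {g}

theorem fconj_eq_of_mem_cvxSubdiff {x y : E} (hy : y ∈ cvxSubdiff g x) :
    fconj g y = ((⟪x, y⟫ - g x : ℝ) : EReal) := by
  refine le_antisymm (iSup_le fun z => ?_) (inner_sub_le_fconj g x y)
  rw [← EReal.coe_sub, EReal.coe_le_coe_iff]
  have := hy z
  rw [inner_sub_right, real_inner_comm z y, real_inner_comm x y] at this
  linarith

theorem eta_eq_of_mem_cvxSubdiff {x y : E} (hy : y ∈ cvxSubdiff g x) : eta g x y = g x := by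
  rw [eta, fconj_eq_of_mem_cvxSubdiff hy, ← EReal.coe_sub, sub_sub_cancel]

end Conjugate

section Objectives

theorem Ffun_ne_bot {X : Type*} (f : X → EReal) (g h : X → ℝ) (x : X) : Ffun f g h x ≠ ⊥ := by
  unfold Ffun
  split_ifs <;> simp

theorem toReal_add_nonneg_of_zeta_nonneg {X : Type*} {f : X → EReal} {h : X → ℝ} {x : X}
    (hfx : f x ≠ ⊤) (hζ : 0 ≤ zeta f h x) :
    0 ≤ (f x).toReal + h x := by
  unfold zeta at hζ
  induction hf : f x using EReal.rec with
  | bot => simp [hf] at hζ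
  | coe r => rw [hf, ← EReal.coe_add, EReal.coe_nonneg] at hζ; rwa [EReal.toReal_coe]
  | top => exact absurd hf hfx

variable {f : E → EReal} {g h : E → ℝ}

theorem Ffun_le_Qfun (hζ : ∀ x, f x ≠ ⊤ → 0 ≤ zeta f h x) (x y : E) :
    Ffun f g h x ≤ Qfun f g h x y := by
  unfold Qfun
  split_ifs with hq
  · obtain ⟨hfx, hη⟩ := hq
    have hηg := eta_le g x y
    obtain ⟨t, ht⟩ : ∃ t : ℝ, eta g x y = t :=
      ⟨_, (EReal.coe_toReal (hηg.trans_lt (EReal.coe_lt_top _)).ne (ne_bot_of_gt hη)).symm⟩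
    rw [ht, EReal.coe_pos] at hη
    rw [ht, EReal.coe_le_coe_iff] at hηg
    rw [Ffun, if_pos ⟨(hη.trans_le hηg).ne', hfx⟩, ht, EReal.toReal_coe, EReal.coe_le_coe_iff]
    exact div_le_div_of_nonneg_left (toReal_add_nonneg_of_zeta_nonneg hfx (hζ x hfx)) hη hηg
  · exact le_top

theorem Qfun_eq_Ffun_of_mem_cvxSubdiff (hg0 : ∀ x, 0 ≤ g x) {x y : E}
    (hy : y ∈ cvxSubdiff g x) : Qfun f g h x y = Ffun f g h x := by
  have hcond : (f x ≠ ⊤ ∧ (0 : EReal) < g x) ↔ (g x ≠ 0 ∧ f x ≠ ⊤) := by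
    rw [EReal.coe_pos, (hg0 x).lt_iff_ne', and_comm]
  simp only [Qfun, Ffun, eta_eq_of_mem_cvxSubdiff hy, hcond, EReal.toReal_coe]

end Objectives

section Product

variable {F : Type*} [NormedAddCommGroup F]

theorem continuous_pr1 : Continuous (pr1 : WithLp 2 (F × F) → F) :=
  continuous_fst.comp (WithLp.prod_continuous_ofLp _ _ _)

theorem pr1_sub (p q : WithLp 2 (F × F)) : pr1 (p - q) = pr1 p - pr1 q := rfl

theorem norm_pr1_le (q : WithLp 2 (F × F)) : ‖pr1 q‖ ≤ ‖q‖ := WithLp.norm_fst_le _ q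

theorem norm_mk2_zero (w : F) : ‖mk2 w (0 : F)‖ = ‖w‖ := WithLp.norm_toLp_fst 2 F F w

theorem dist_mk2_le (x x' y y' : F) : dist (mk2 x y) (mk2 x' y') ≤ dist x x' + dist y y' := by
  rw [WithLp.prod_dist_eq_of_L2, Real.sqrt_le_left (by positivity)]
  change dist x x' ^ 2 + dist y y' ^ 2 ≤ _
  nlinarith [dist_nonneg (x := x) (y := x'), dist_nonneg (x := y) (y := y')]

theorem continuous_mk2_right (x : F) : Continuous (mk2 x) :=
  (WithLp.prod_continuous_toLp 2 F F).comp (Continuous.prodMk_right x)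

theorem _root_.Filter.Tendsto.mk2 {ι : Type*} {l : Filter ι} {u v : ι → F} {x y : F}
    (hu : Tendsto u l (𝓝 x)) (hv : Tendsto v l (𝓝 y)) :
    Tendsto (fun k => mk2 (u k) (v k)) l (𝓝 (mk2 x y)) :=
  ((WithLp.prod_continuous_toLp 2 F F).tendsto (x, y)).comp (hu.prodMk_nhds hv)

end Product

theorem inner_mk2_zero_left (w : E) (q : WithLp 2 (E × E)) : ⟪mk2 w 0, q⟫ = ⟪w, pr1 q⟫ := by
  rw [WithLp.prod_inner_apply]
  change ⟪w, pr1 q⟫ + ⟪(0 : E), _⟫ = _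
  rw [inner_zero_left, add_zero]

theorem mk2_zero_mem_frSubdiff_of_le {Φ : E → EReal} {Ψ : WithLp 2 (E × E) → EReal}
    {p : WithLp 2 (E × E)} {w : E} (hle : ∀ q, Φ (pr1 q) ≤ Ψ q) (heq : Ψ p = Φ (pr1 p))
    (hbot : Φ (pr1 p) ≠ ⊥) (hw : w ∈ frSubdiff Φ (pr1 p)) : mk2 w 0 ∈ frSubdiff Ψ p := by
  obtain ⟨r, hr⟩ : ∃ r : ℝ, Φ (pr1 p) = r := ⟨_, (EReal.coe_toReal hw.1 hbot).symm⟩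
  rw [mem_frSubdiff_iff hr] at hw
  rw [mem_frSubdiff_iff (heq.trans hr)]
  intro b hb
  filter_upwards [(continuous_pr1.tendsto p).eventually (hw b hb)] with q hq
  refine le_trans ?_ (hq.trans (hle q))
  have hnorm := norm_pr1_le (q - p)
  rw [pr1_sub] at hnorm
  rw [EReal.coe_le_coe_iff, inner_mk2_zero_left, pr1_sub]
  nlinarith

section ConvexSubdiff

variable {g : E → ℝ}

theorem norm_le_of_mem_cvxSubdiff_of_lipschitzOnWith {K : ℝ≥0} {u y : E} {r : ℝ} (hr : 0 < r)
    (hK : LipschitzOnWith K g (Metric.ball u r)) (hy : y ∈ cvxSubdiff g u) : ‖y‖ ≤ K := by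
  set s := r / (‖y‖ + 1) with hs_def
  have hs : 0 < s := by positivity
  have hstep : ‖s • y‖ = s * ‖y‖ := by rw [norm_smul, Real.norm_of_nonneg hs.le]
  have hmem : u + s • y ∈ Metric.ball u r := by
    rw [Metric.mem_ball, dist_self_add_left, hstep, hs_def, div_mul_eq_mul_div,
      div_lt_iff₀ (by positivity)]
    nlinarith
  have hsub := hy (u + s • y)
  rw [add_sub_cancel_left, real_inner_smul_right, real_inner_self_eq_norm_sq] at hsub
  have hlip := hK.dist_le_mul _ hmem _ (Metric.mem_ball_self hr)
  rw [dist_self_add_left, hstep, Real.dist_eq] at hlip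
  have hsq : s * ‖y‖ ^ 2 ≤ s * (K * ‖y‖) := by
    nlinarith [le_abs_self (g (u + s • y) - g u)]
  nlinarith [le_of_mul_le_mul_left hsq hs, norm_nonneg y, K.2]

theorem exists_forall_norm_le_of_mem_cvxSubdiff (hg : LocallyLipschitz g) (z : E) :
    ∃ r > 0, ∃ L : ℝ, ∀ u ∈ Metric.ball z r, ∀ y ∈ cvxSubdiff g u, ‖y‖ ≤ L := by
  obtain ⟨K, t, ht, hK⟩ := hg z
  obtain ⟨r, hr, hball⟩ := Metric.mem_nhds_iff.1 ht
  refine ⟨r / 2, half_pos hr, K, fun u hu y hy => ?_⟩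
  refine norm_le_of_mem_cvxSubdiff_of_lipschitzOnWith (half_pos hr)
    (hK.mono ((Metric.ball_subset_ball' ?_).trans hball)) hy
  linarith [Metric.mem_ball.1 hu]

theorem mem_cvxSubdiff_of_tendsto (hg : Continuous g) {u ys : ℕ → E} {x y : E}
    (hu : Tendsto u atTop (𝓝 x)) (hy : Tendsto ys atTop (𝓝 y))
    (hmem : ∀ k, ys k ∈ cvxSubdiff g (u k)) : y ∈ cvxSubdiff g x := fun z =>
  le_of_tendsto' (((hg.tendsto x).comp hu).add (hy.inner (tendsto_const_nhds.sub hu)))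
    fun k => hmem k z

variable [FiniteDimensional ℝ E]

theorem cvxSubdiff_nonempty (hg : ConvexOn ℝ univ g) (u : E) : (cvxSubdiff g u).Nonempty := by
  -- a hyperplane separating `(u, g u)` from the open strict epigraph is non-vertical (`β < 0`),
  -- and its slope is a subgradient
  have hgc := hg.locallyLipschitz.continuous
  obtain ⟨φ, hφ⟩ := geometric_hahn_banach_open_point (x := (u, g u))
    (by simpa using hg.convex_strict_epigraph)
    (isOpen_lt (hgc.comp continuous_fst) continuous_snd) (lt_irrefl (g u))
  set ℓ := φ.comp (ContinuousLinearMap.inl ℝ E ℝ)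
  set β := φ (0, 1)
  have hφ_apply : ∀ x t, φ (x, t) = ℓ x + t * β := fun x t => by
    have : ((x, t) : E × ℝ) = (x, 0) + t • (0, 1) := by ext <;> simp
    rw [this, map_add, map_smul, smul_eq_mul]
    rfl
  have hβ : β < 0 := by
    have := hφ (u, g u + 1) (lt_add_one (g u))
    rw [hφ_apply, hφ_apply] at this
    linarith
  have hsupp : ∀ x, ℓ x + g x * β ≤ ℓ u + g u * β := fun x =>
    le_of_forall_pos_lt_add fun ε hε => by
      have := hφ (x, g x + ε / -β) (lt_add_of_pos_right _ (div_pos hε (neg_pos.2 hβ)))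
      rw [hφ_apply, hφ_apply, add_mul, div_mul_eq_mul_div, div_neg, mul_div_cancel_right₀ _ hβ.ne]
        at this
      linarith
  refine ⟨(InnerProductSpace.toDual ℝ E).symm ((-β)⁻¹ • ℓ), fun z => ?_⟩
  rw [InnerProductSpace.toDual_symm_apply, smul_apply, map_sub, smul_eq_mul]
  have : (-β)⁻¹ * (ℓ z - ℓ u) ≤ g z - g u := by
    rw [inv_mul_le_iff₀ (neg_pos.2 hβ)]
    nlinarith [hsupp z]
  linarith

theorem exists_subseq_tendsto_of_mem_cvxSubdiff (hg : ConvexOn ℝ univ g) {u ys : ℕ → E} {x : E}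
    (hu : Tendsto u atTop (𝓝 x)) (hys : ∀ k, ys k ∈ cvxSubdiff g (u k)) :
    ∃ y ∈ cvxSubdiff g x, ∃ σ : ℕ → ℕ, StrictMono σ ∧ Tendsto (ys ∘ σ) atTop (𝓝 y) := by
  obtain ⟨r, hr, L, hL⟩ := exists_forall_norm_le_of_mem_cvxSubdiff hg.locallyLipschitz x
  have hbdd : ∃ᶠ k in atTop, ys k ∈ Metric.closedBall 0 L :=
    ((hu.eventually (Metric.ball_mem_nhds x hr)).mono fun k hk =>
      mem_closedBall_zero_iff.2 (hL _ hk _ (hys k))).frequently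
  obtain ⟨y, -, σ, hσ, hy⟩ := tendsto_subseq_of_frequently_bounded Metric.isBounded_closedBall hbdd
  exact ⟨y, mem_cvxSubdiff_of_tendsto hg.locallyLipschitz.continuous
    (hu.comp hσ.tendsto_atTop) hy fun k => hys (σ k), σ, hσ, hy⟩

theorem isCompact_cvxSubdiff (hg : ConvexOn ℝ univ g) (x : E) : IsCompact (cvxSubdiff g x) := by
  obtain ⟨r, hr, L, hL⟩ := exists_forall_norm_le_of_mem_cvxSubdiff hg.locallyLipschitz x
  refine Metric.isCompact_of_isClosed_isBounded ?_ ?_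
  · exact IsSeqClosed.isClosed fun ys y hys hy =>
      mem_cvxSubdiff_of_tendsto hg.locallyLipschitz.continuous tendsto_const_nhds hy hys
  · exact (Metric.isBounded_closedBall (x := 0) (r := L)).subset fun y hy =>
      mem_closedBall_zero_iff.2 (hL x (Metric.mem_ball_self hr) y hy)

theorem eventually_forall_mem_cvxSubdiff_exists_dist_lt (hg : ConvexOn ℝ univ g) (x : E)
    {ρ : ℝ} (hρ : 0 < ρ) :
    ∀ᶠ z in 𝓝 x, ∀ y ∈ cvxSubdiff g z, ∃ y₀ ∈ cvxSubdiff g x, dist y y₀ < ρ := by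
  by_contra hcon
  obtain ⟨u, hu, hfar⟩ := frequently_iff_seq_forall.1 (not_eventually.1 hcon)
  push Not at hfar
  choose ys hys hfar using hfar
  obtain ⟨y, hy, σ, -, hσ⟩ := exists_subseq_tendsto_of_mem_cvxSubdiff hg hu hys
  obtain ⟨k, hk⟩ := (hσ.eventually (Metric.ball_mem_nhds y hρ)).exists
  exact (hfar (σ k) y hy).not_gt hk

end ConvexSubdiff

section Transfer

variable {f : E → EReal} {g h : E → ℝ}

theorem mk2_zero_mem_frSubdiff_Qpair (hζ : ∀ x, f x ≠ ⊤ → 0 ≤ zeta f h x) (hg0 : ∀ x, 0 ≤ g x)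
    {u y w : E} (hw : w ∈ frSubdiff (Ffun f g h) u) (hy : y ∈ cvxSubdiff g u) :
    mk2 w 0 ∈ frSubdiff (Qpair f g h) (mk2 u y) :=
  mk2_zero_mem_frSubdiff_of_le (fun _ => Ffun_le_Qfun hζ _ _)
    (Qfun_eq_Ffun_of_mem_cvxSubdiff hg0 hy) (Ffun_ne_bot f g h u) hw

theorem exists_mk2_zero_mem_limSubdiff_Qpair [FiniteDimensional ℝ E]
    (hζ : ∀ x, f x ≠ ⊤ → 0 ≤ zeta f h x) (hg0 : ∀ x, 0 ≤ g x) (hg : ConvexOn ℝ univ g)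
    {z w : E} (hw : w ∈ limSubdiff (Ffun f g h) z) :
    ∃ y ∈ cvxSubdiff g z, mk2 w 0 ∈ limSubdiff (Qpair f g h) (mk2 z y) := by
  obtain ⟨u, v, hu, hFu, hv, hvw⟩ := hw
  choose ys hys using fun k => cvxSubdiff_nonempty hg (u k)
  obtain ⟨y, hy, σ, hσ, hyσ⟩ := exists_subseq_tendsto_of_mem_cvxSubdiff hg hu hys
  have hQF : ∀ {x y}, y ∈ cvxSubdiff g x → Qpair f g h (mk2 x y) = Ffun f g h x :=
    Qfun_eq_Ffun_of_mem_cvxSubdiff hg0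
  refine ⟨y, hy, fun k => mk2 (u (σ k)) (ys (σ k)), fun k => mk2 (v (σ k)) 0,
    (hu.comp hσ.tendsto_atTop).mk2 hyσ, ?_,
    fun k => mk2_zero_mem_frSubdiff_Qpair hζ hg0 (hv (σ k)) (hys (σ k)),
    (hvw.comp hσ.tendsto_atTop).mk2 tendsto_const_nhds⟩
  simp only [hQF (hys _), hQF hy]
  exact hFu.comp hσ.tendsto_atTop

end Transfer

section UniformKL

variable {ψ : E → EReal} {a θ : ℝ}

def KLExpIneqAt (ψ : E → EReal) (a θ c ε : ℝ) (p : E) : Prop :=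
  (a : EReal) < ψ p → ψ p < a + (ε : EReal) →
    ENNReal.ofReal (c * ((ψ p).toReal - a) ^ θ) ≤ Metric.infEDist 0 (limSubdiff ψ p)

def KLExpUniformOn (ψ : E → EReal) (a θ : ℝ) (S : Set E) : Prop :=
  ∃ c > (0 : ℝ), ∃ ε > (0 : ℝ), ∃ ρ > (0 : ℝ),
    ∀ s ∈ S, ∀ p ∈ Metric.ball s ρ, KLExpIneqAt ψ a θ c ε p

theorem klExpAt_iff {x : E} (hx : ψ x = a) :
    KLExpAt ψ x θ ↔ ∃ c > (0 : ℝ), ∃ ε > (0 : ℝ), ∃ δ > (0 : ℝ),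
      ∀ z ∈ Metric.ball x δ, KLExpIneqAt ψ a θ c ε z := by
  simp only [KLExpAt, KLExpIneqAt, hx, EReal.toReal_coe]
  rfl

theorem KLExpAt.of_eq_top {x : E} (hx : ψ x = ⊤) : KLExpAt ψ x θ :=
  ⟨1, one_pos, 1, one_pos, 1, one_pos, fun _ _ hlt _ => absurd (hx ▸ hlt) not_top_lt⟩

theorem KLExpIneqAt.mono {c c' ε ε' : ℝ} {p : E} (h : KLExpIneqAt ψ a θ c ε p) (hc : c' ≤ c)
    (hε : ε' ≤ ε) : KLExpIneqAt ψ a θ c' ε' p := fun hlt hlt' => by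
  have hp : ψ p < a + (ε : EReal) := hlt'.trans_le (by gcongr)
  have ha : a ≤ (ψ p).toReal := by
    simpa using EReal.toReal_le_toReal hlt.le (EReal.coe_ne_bot a)
      (hp.trans (EReal.coe_add a ε ▸ EReal.coe_lt_top _)).ne
  exact (ENNReal.ofReal_le_ofReal (mul_le_mul_of_nonneg_right hc
    (Real.rpow_nonneg (sub_nonneg.2 ha) θ))).trans (h hlt hp)

theorem KLExpUniformOn.mono {S T : Set E} (h : KLExpUniformOn ψ a θ T) (hST : S ⊆ T) :
    KLExpUniformOn ψ a θ S :=
  let ⟨c, hc, ε, hε, ρ, hρ, H⟩ := h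
  ⟨c, hc, ε, hε, ρ, hρ, fun s hs => H s (hST hs)⟩

theorem KLExpUniformOn.union {S T : Set E} (hS : KLExpUniformOn ψ a θ S)
    (hT : KLExpUniformOn ψ a θ T) : KLExpUniformOn ψ a θ (S ∪ T) := by
  obtain ⟨c, hc, ε, hε, ρ, hρ, HS⟩ := hS
  obtain ⟨c', hc', ε', hε', ρ', hρ', HT⟩ := hT
  refine ⟨min c c', lt_min hc hc', min ε ε', lt_min hε hε', min ρ ρ', lt_min hρ hρ', ?_⟩
  rintro s (hs | hs) p hp
  · exact (HS s hs p (Metric.ball_subset_ball (min_le_left _ _) hp)).mono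
      (min_le_left _ _) (min_le_left _ _)
  · exact (HT s hs p (Metric.ball_subset_ball (min_le_right _ _) hp)).mono
      (min_le_right _ _) (min_le_right _ _)

theorem KLExpAt.exists_klExpUniformOn_nhds {x : E} (h : KLExpAt ψ x θ) (hx : ψ x = a) :
    ∃ t ∈ 𝓝 x, KLExpUniformOn ψ a θ t := by
  obtain ⟨c, hc, ε, hε, δ, hδ, H⟩ := (klExpAt_iff hx).1 h
  refine ⟨Metric.ball x (δ / 2), Metric.ball_mem_nhds x (half_pos hδ),
    c, hc, ε, hε, δ / 2, half_pos hδ, fun s hs p hp => H p ?_⟩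
  exact Metric.ball_subset_ball' (by linarith [Metric.mem_ball.1 hs]) hp

theorem KLExpUniformOn.of_isCompact {S : Set E} (hS : IsCompact S)
    (hKL : ∀ s ∈ S, ψ s = a ∧ KLExpAt ψ s θ) : KLExpUniformOn ψ a θ S := by
  refine hS.induction_on ?_ (fun _ _ hst ht => ht.mono hst) (fun _ _ hs ht => hs.union ht)
    fun x hx => ?_
  · exact ⟨1, one_pos, 1, one_pos, 1, one_pos, fun s hs => absurd hs (notMem_empty s)⟩
  · obtain ⟨t, ht, H⟩ := (hKL x hx).2.exists_klExpUniformOn_nhds (hKL x hx).1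
    exact ⟨t, mem_nhdsWithin_of_mem_nhds ht, H⟩

end UniformKL

theorem statement7_general {n : ℕ} (f : EuclideanSpace ℝ (Fin n) → EReal)
    (g h : EuclideanSpace ℝ (Fin n) → ℝ) (hb : Blanket f g h)
    (θ : ℝ)
    (xb : EuclideanSpace ℝ (Fin n))
    (hKL : ∀ yb ∈ cvxSubdiff g xb, KLExpAt (Qpair f g h) (mk2 xb yb) θ) :
    KLExpAt (Ffun f g h) xb θ := by
  have hQF : ∀ {x y}, y ∈ cvxSubdiff g x → Qpair f g h (mk2 x y) = Ffun f g h x :=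
    Qfun_eq_Ffun_of_mem_cvxSubdiff hb.g_nonneg
  rcases eq_or_ne (Ffun f g h xb) ⊤ with htop | hfin
  · exact .of_eq_top htop
  obtain ⟨a, ha⟩ : ∃ a : ℝ, Ffun f g h xb = a :=
    ⟨_, (EReal.coe_toReal hfin (Ffun_ne_bot f g h xb)).symm⟩
  obtain ⟨c, hc, ε, hε, ρ, hρ, hunif⟩ :
      KLExpUniformOn (Qpair f g h) a θ (mk2 xb '' cvxSubdiff g xb) :=
    .of_isCompact ((isCompact_cvxSubdiff hb.g_convex xb).image (continuous_mk2_right xb))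
      (by rintro _ ⟨y, hy, rfl⟩; exact ⟨(hQF hy).trans ha, hKL y hy⟩)
  obtain ⟨d, hd, hosc⟩ := Metric.eventually_nhds_iff.1
    (eventually_forall_mem_cvxSubdiff_exists_dist_lt hb.g_convex xb (half_pos hρ))
  refine (klExpAt_iff ha).2 ⟨c, hc, ε, hε, min d (ρ / 2), lt_min hd (half_pos hρ),
    fun z hz hlt hlt' => Metric.le_infEDist.2 fun w hw => ?_⟩
  rw [Metric.mem_ball, lt_min_iff] at hz
  obtain ⟨y, hy, hwQ⟩ :=
    exists_mk2_zero_mem_limSubdiff_Qpair hb.zeta_nonneg hb.g_nonneg hb.g_convex hw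
  obtain ⟨y₀, hy₀, hyy₀⟩ := hosc hz.1 y hy
  have hKLz := hunif _ ⟨y₀, hy₀, rfl⟩ (mk2 z y) ((dist_mk2_le _ _ _ _).trans_lt (by linarith))
  rw [KLExpIneqAt, hQF hy] at hKLz
  calc _ ≤ Metric.infEDist 0 (limSubdiff (Qpair f g h) (mk2 z y)) := hKLz hlt hlt'
    _ ≤ edist 0 (mk2 w 0) := Metric.infEDist_le_edist_of_mem hwQ
    _ = edist 0 w := by rw [edist_dist, edist_dist, dist_zero_left, dist_zero_left, norm_mk2_zero]

/-- Transfer of the KL exponent from `Q` to `F`. -/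
theorem statement7 {n : ℕ} (f : EuclideanSpace ℝ (Fin n) → EReal)
    (g h : EuclideanSpace ℝ (Fin n) → ℝ) (hb : Blanket f g h)
    (θ : ℝ) (hθ0 : 0 ≤ θ) (hθ1 : θ < 1)
    (xb : EuclideanSpace ℝ (Fin n))
    (hxb : (limSubdiff (Ffun f g h) xb).Nonempty)
    (hcalm : CalmOn (fconj g) (edom (fconj g)))
    (hKL : ∀ yb ∈ cvxSubdiff g xb, KLExpAt (Qpair f g h) (mk2 xb yb) θ) :
    KLExpAt (Ffun f g h) xb θ :=
  statement7_general f g h hb θ xb hKL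
end Paper
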